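/- Let n ≥ 1 be an integer, a ∈ ℝ, and k ≥ 0 an integer. There exists a constant C > 0 depending only on n, a, k such that for every y > 0 and every z ∈ ℝ^n, the k-th iterated Laplacian in z of the function z ↦ (|z|² + y²)^{−a/2} satisfies |Δ_z^k (|z|² + y²)^{−a/2}| ≤ C (|z|² + y²)^{−(a+2k)/2}. -/

import Mathlib

open MeasureTheory Real

/-- The Laplacian on `ℝ^n`: sum of second partial derivatives. -/
noncomputable def lap {n : ℕ} (f : EuclideanSpace ℝ (Fin n) → ℝ) :
    EuclideanSpace ℝ (Fin n) → ℝ :=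
  fun x => ∑ i, fderiv ℝ (fun z => fderiv ℝ f z (EuclideanSpace.single i 1)) x
    (EuclideanSpace.single i 1)

/-!
A radial function `g (‖z‖²)` has Laplacian `4 t g'' (t) + 2 n g' (t)` at `t = ‖z‖²`. With `c = y²`,
the functions `(t + c) ^ d * P (t / (t + c))`, `P` a real polynomial (the sums of terms
`t ^ j * (t + c) ^ (d - j)`), are closed under `d/dt` and under multiplication by `t`, each operation
moving `d` by one. Hence `Δ^k (t + c) ^ (-a/2) = (t + c) ^ (-a/2 - k) * Q (t / (t + c))` for a
polynomial `Q` independent of `c`, and `|Q|` is bounded on `[0, 1] ∋ t / (t + c)`.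
-/

theorem lap_comp_norm_sq {n : ℕ} {g g' g'' : ℝ → ℝ}
    (hg : ∀ t, 0 ≤ t → HasDerivAt g (g' t) t) (hg' : ∀ t, 0 ≤ t → HasDerivAt g' (g'' t) t) :
    lap (fun z : EuclideanSpace ℝ (Fin n) => g (‖z‖ ^ 2)) =
      fun z => 4 * ‖z‖ ^ 2 * g'' (‖z‖ ^ 2) + 2 * n * g' (‖z‖ ^ 2) := by
  have hasFDerivAt_comp {f f' : ℝ → ℝ} (hf : ∀ t, 0 ≤ t → HasDerivAt f (f' t) t)
      (z : EuclideanSpace ℝ (Fin n)) :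
      HasFDerivAt (fun w : EuclideanSpace ℝ (Fin n) => f (‖w‖ ^ 2))
        (f' (‖z‖ ^ 2) • (2 • innerSL ℝ z)) z :=
    (hf _ (sq_nonneg _)).comp_hasFDerivAt z (hasStrictFDerivAt_norm_sq z).hasFDerivAt
  have partial_eq (i : Fin n) :
      (fun w => fderiv ℝ (fun w : EuclideanSpace ℝ (Fin n) => g (‖w‖ ^ 2)) w
        (EuclideanSpace.single i 1)) = fun w => g' (‖w‖ ^ 2) * (2 * w i) := by
    ext w
    simp [(hasFDerivAt_comp hg w).fderiv, EuclideanSpace.inner_single_right]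
  ext z
  have second_partial (i : Fin n) :
      fderiv ℝ (fun w => g' (‖w‖ ^ 2) * (2 * w i)) z (EuclideanSpace.single i 1) =
        4 * g'' (‖z‖ ^ 2) * z i ^ 2 + 2 * g' (‖z‖ ^ 2) := by
    have hproj : HasFDerivAt (fun w : EuclideanSpace ℝ (Fin n) => 2 * w i)
        ((2 : ℝ) • (EuclideanSpace.proj i : EuclideanSpace ℝ (Fin n) →L[ℝ] ℝ)) z :=
      (EuclideanSpace.proj i : EuclideanSpace ℝ (Fin n) →L[ℝ] ℝ).hasFDerivAt.const_mul 2
    have hprod : HasFDerivAt (fun w => g' (‖w‖ ^ 2) * (2 * w i)) _ z :=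
      (hasFDerivAt_comp hg' z).mul hproj
    rw [hprod.fderiv]
    simp only [add_apply, smul_apply, PiLp.proj_apply,
      PiLp.single_eq_same, smul_eq_mul, mul_one, coe_innerSL_apply,
      EuclideanSpace.inner_single_right, ringHom_apply, one_mul, nsmul_eq_mul, Nat.cast_ofNat]
    ring
  simp only [lap, partial_eq, second_partial, Finset.sum_add_distrib, ← Finset.mul_sum,
    ← EuclideanSpace.real_norm_sq_eq, Finset.sum_const, Finset.card_univ, Fintype.card_fin,
    nsmul_eq_mul]
  ring

section Profiles

open Polynomial

noncomputable def homProfile (c d : ℝ) (P : ℝ[X]) (t : ℝ) : ℝ :=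
  (t + c) ^ d * P.eval (t / (t + c))

-- `d/dt (t / (t + c)) = (1 - t / (t + c)) / (t + c)`
noncomputable def profileDeriv (d : ℝ) (P : ℝ[X]) : ℝ[X] :=
  C d * P + (1 - X) * derivative P

theorem hasDerivAt_homProfile {c t : ℝ} (d : ℝ) (P : ℝ[X]) (h : 0 < t + c) :
    HasDerivAt (homProfile c d P) (homProfile c (d - 1) (profileDeriv d P) t) t := by
  have hpow : HasDerivAt (fun t => (t + c) ^ d) (d * (t + c) ^ (d - 1)) t := by
    simpa using ((hasDerivAt_id t).add_const c).rpow_const (p := d) (Or.inl h.ne')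
  have hquot : HasDerivAt (fun t => t / (t + c)) ((1 * (t + c) - t * 1) / (t + c) ^ 2) t :=
    (hasDerivAt_id t).div ((hasDerivAt_id t).add_const c) h.ne'
  have hprod : HasDerivAt (fun t => (t + c) ^ d * P.eval (t / (t + c))) _ t :=
    hpow.mul ((P.hasDerivAt _).comp t hquot)
  refine hprod.congr_deriv ?_
  simp only [homProfile, profileDeriv, eval_add, eval_mul, eval_C, eval_sub, eval_one, eval_X]
  rw [Real.rpow_sub_one h.ne']
  field_simp

noncomputable def profileLap (n : ℕ) (d : ℝ) (P : ℝ[X]) : ℝ[X] :=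
  C 4 * X * profileDeriv (d - 1) (profileDeriv d P) + C (2 * (n : ℝ)) * profileDeriv d P

theorem lap_homProfile {n : ℕ} {c : ℝ} (hc : 0 < c) (d : ℝ) (P : ℝ[X]) :
    lap (fun z : EuclideanSpace ℝ (Fin n) => homProfile c d P (‖z‖ ^ 2)) =
      fun z => homProfile c (d - 1) (profileLap n d P) (‖z‖ ^ 2) := by
  have pos {t : ℝ} (ht : 0 ≤ t) : 0 < t + c := by positivity
  rw [lap_comp_norm_sq (fun t ht => hasDerivAt_homProfile d P (pos ht))
    (fun t ht => hasDerivAt_homProfile (d - 1) _ (pos ht))]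
  ext z
  have hs := pos (sq_nonneg ‖z‖)
  simp only [homProfile, profileLap, eval_add, eval_mul, eval_C, eval_X]
  rw [Real.rpow_sub_one hs.ne' (d - 1)]
  field_simp

noncomputable def profileLapIter (n : ℕ) : ℕ → ℝ → ℝ[X] → ℝ[X]
  | 0, _, P => P
  | k + 1, d, P => profileLapIter n k (d - 1) (profileLap n d P)

theorem iterate_lap_homProfile {n : ℕ} {c : ℝ} (hc : 0 < c) (k : ℕ) (d : ℝ) (P : ℝ[X]) :
    lap^[k] (fun z : EuclideanSpace ℝ (Fin n) => homProfile c d P (‖z‖ ^ 2)) =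
      fun z => homProfile c (d - k) (profileLapIter n k d P) (‖z‖ ^ 2) := by
  induction k generalizing d P with
  | zero => simp [profileLapIter]
  | succ k ih =>
    rw [Function.iterate_succ_apply, lap_homProfile hc, ih, profileLapIter, Nat.cast_succ,
      sub_sub, add_comm (1 : ℝ)]

theorem exists_abs_homProfile_le (d : ℝ) (P : ℝ[X]) :
    ∃ M, ∀ c t, 0 < c → 0 ≤ t → |homProfile c d P t| ≤ M * (t + c) ^ d := by
  obtain ⟨M, hM⟩ := isCompact_Icc.exists_bound_of_continuousOn (P.continuous.continuousOn
    (s := Set.Icc (0 : ℝ) 1))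
  refine ⟨M, fun c t hc ht => ?_⟩
  have hs : 0 < t + c := by positivity
  have hu : t / (t + c) ∈ Set.Icc (0 : ℝ) 1 :=
    ⟨div_nonneg ht hs.le, div_le_one_of_le₀ (by linarith) hs.le⟩
  rw [homProfile, abs_mul, abs_of_pos (Real.rpow_pos_of_pos hs d), mul_comm M]
  exact mul_le_mul_of_nonneg_left (hM _ hu) (Real.rpow_nonneg hs.le d)

end Profiles

theorem stmt_12 (n : ℕ) (a : ℝ) (k : ℕ) :
    ∃ C : ℝ, 0 < C ∧
      ∀ (y : ℝ), 0 < y → ∀ z : EuclideanSpace ℝ (Fin n),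
        |(lap^[k] (fun z' => (‖z'‖ ^ 2 + y ^ 2) ^ (-a / 2))) z| ≤
          C * (‖z‖ ^ 2 + y ^ 2) ^ (-(a + 2 * k) / 2) := by
  obtain ⟨M, hM⟩ := exists_abs_homProfile_le (-a / 2 - k) (profileLapIter n k (-a / 2) 1)
  refine ⟨max M 1, by positivity, fun y hy z => ?_⟩
  have initial : (fun z' : EuclideanSpace ℝ (Fin n) => (‖z'‖ ^ 2 + y ^ 2) ^ (-a / 2)) =
      fun z' => homProfile (y ^ 2) (-a / 2) 1 (‖z'‖ ^ 2) := by
    simp [homProfile]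
  rw [initial, iterate_lap_homProfile (by positivity), show -(a + 2 * k) / 2 = -a / 2 - k by ring]
  calc _ ≤ M * (‖z‖ ^ 2 + y ^ 2) ^ (-a / 2 - k) := hM _ _ (by positivity) (sq_nonneg _)
    _ ≤ max M 1 * (‖z‖ ^ 2 + y ^ 2) ^ (-a / 2 - k) := by gcongr; exact le_max_left M 1
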